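/- Let n ≥ 2 and let a, b be complex numbers with |a| = 1, a ≠ −1, b ≠ 0, and a + n·b = −1. Let κ be a complex number with Re κ > 0. For d > 0 define u(d) = −n/d and v(d) = −1/d − i(a−1)/(a+1); define G^{u}_κ(x,y) = e^{−κ·max(x,y)}·((u(d)/n)·sinh(κ·min(x,y)) + κ·cosh(κ·min(x,y)))/(κ·(u(d)/n + κ)), the Krein kernel G^{u,v}_{κ,d}(x,y) = G^{u}_κ(x,y) + G^{u}_κ(x,d)·G^{u}_κ(d,y)/(−v(d)⁻¹ − G^{u}_κ(d,d)), and the Dirichlet kernel G_κ(x,y) = κ⁻¹·sinh(κ·min(x,y))·e^{−κ·max(x,y)}. Then ∫₀^∞∫₀^∞ |G^{u,v}_{κ,d}(x,y) − G_κ(x,y)|² dx dy → 0 as d → 0+ (the kernels being well defined for all sufficiently small d > 0). -/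

import Mathlib

open Complex Set Filter

/-- Green function of the negative Laplacian on the half-line with Robin
condition `ψ'(0) = (u/n)ψ(0)` at the origin. -/
noncomputable def greenU (n : ℕ) (u κ : ℂ) (x y : ℝ) : ℂ :=
  Complex.exp (-κ * (max x y : ℝ))
    * ((u / n) * Complex.sinh (κ * (min x y : ℝ))
        + κ * Complex.cosh (κ * (min x y : ℝ)))
    / (κ * (u / n + κ))

/-- Krein-formula Green function obtained from `greenU` by adding a
δ interaction of strength `v` at the point `d`. -/
noncomputable def greenUv (n : ℕ) (u v κ : ℂ) (d x y : ℝ) : ℂ :=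
  greenU n u κ x y
    + greenU n u κ x d * greenU n u κ d y / (-v⁻¹ - greenU n u κ d d)

/-- Green function of the negative Laplacian on the half-line with boundary
condition `(a+nb-1)ψ(0) + i(a+nb+1)ψ'(0) = 0` at the origin. -/
noncomputable def greenAB (n : ℕ) (a b κ : ℂ) (x y : ℝ) : ℂ :=
  Complex.exp (-κ * (max x y : ℝ))
    * (Complex.I * (a + n * b - 1) * Complex.sinh (κ * (min x y : ℝ))
        + κ * (a + n * b + 1) * Complex.cosh (κ * (min x y : ℝ)))
    / (κ * (Complex.I * (a + n * b - 1) + κ * (a + n * b + 1)))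

/-- The coupling strength of the δ interactions at distance `d`. -/
noncomputable def vCoupling (a : ℂ) (d : ℝ) : ℂ :=
  -1 / (d : ℂ) - Complex.I * (a - 1) / (a + 1)

/-- The strength of the δ coupling at the vertex in the generic case. -/
noncomputable def uCoupling (n : ℕ) (a b : ℂ) (d : ℝ) : ℂ :=
  (Complex.I * n / (d : ℂ) ^ 2)
    * ((a - 1 + n * b) / (a + 1 + n * b) + (a - 1) / (a + 1))⁻¹

/-- Green function of the Dirichlet negative Laplacian on the half-line. -/
noncomputable def greenD (κ : ℂ) (x y : ℝ) : ℂ :=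
  κ⁻¹ * Complex.sinh (κ * (min x y : ℝ)) * Complex.exp (-κ * (max x y : ℝ))

/-!
With `u / n = -1 / d` the Robin kernel differs from the Dirichlet one by exactly
`e^{-κ(x+y)} / (κ - 1/d)`, which is `O(d) e^{-Re κ (x+y)}`. In the Krein correction both
`G^u(x,d)` and `G^u(d,y)` are `O(d) e^{-Re κ x}` resp. `O(d) e^{-Re κ y}`, while the denominator
`-v⁻¹ - G^u(d,d)` stays of size `≍ d`: `-v⁻¹ ≈ d`, and
`G^u(d,d) = e^{-z}(z cosh z - sinh z) / (κ(z - 1))` with `z = κ d` is `O(|κ| d²)` because the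
terms of order `z` cancel. Hence the whole kernel difference is `O(d e^{-Re κ (x+y)})`, and its
squared `L²` norm over the quadrant is `O(d²)`.
-/

open Topology MeasureTheory

namespace Complex

theorem norm_sinh_le_two_mul {z : ℂ} (hz : ‖z‖ ≤ 1) : ‖sinh z‖ ≤ 2 * ‖z‖ := by
  have h₁ := norm_exp_sub_one_le hz
  have h₂ := norm_exp_sub_one_le (x := -z) (by rwa [norm_neg])
  rw [norm_neg] at h₂
  have h : sinh z = ((exp z - 1) - (exp (-z) - 1)) / 2 := by rw [sinh]; ring
  rw [h, norm_div, Complex.norm_two]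
  linarith [norm_sub_le (exp z - 1) (exp (-z) - 1)]

theorem norm_mul_cosh_sub_sinh_le {z : ℂ} (hz : ‖z‖ ≤ 1) :
    ‖z * cosh z - sinh z‖ ≤ 2 * ‖z‖ ^ 2 := by
  have h₁ := norm_exp_sub_one_sub_id_le hz
  have h₂ := norm_exp_sub_one_sub_id_le (x := -z) (by rwa [norm_neg])
  rw [norm_neg] at h₂
  have hm : ‖z - 1‖ ≤ 2 := (norm_sub_le _ _).trans (by rw [norm_one]; linarith)
  have hp : ‖z + 1‖ ≤ 2 := (norm_add_le _ _).trans (by rw [norm_one]; linarith)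
  -- the first-order terms of `exp z` and `exp (-z)` cancel
  have h : z * cosh z - sinh z
      = ((z - 1) * (exp z - 1 - z) + (z + 1) * (exp (-z) - 1 - -z)) / 2 := by
    rw [cosh, sinh]; ring
  rw [h, norm_div, Complex.norm_two]
  calc ‖(z - 1) * (exp z - 1 - z) + (z + 1) * (exp (-z) - 1 - -z)‖ / 2
      ≤ (‖z - 1‖ * ‖exp z - 1 - z‖ + ‖z + 1‖ * ‖exp (-z) - 1 - -z‖) / 2 := by
        gcongr
        exact (norm_add_le _ _).trans_eq (by rw [norm_mul, norm_mul])
    _ ≤ (2 * ‖z‖ ^ 2 + 2 * ‖z‖ ^ 2) / 2 := by gcongr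
    _ = 2 * ‖z‖ ^ 2 := by ring

theorem norm_exp_neg_mul_ofReal (κ : ℂ) (x : ℝ) : ‖exp (-κ * x)‖ = Real.exp (-κ.re * x) := by
  simp [norm_exp]

end Complex

theorem greenU_comm (n : ℕ) (u κ : ℂ) (x y : ℝ) : greenU n u κ x y = greenU n u κ y x := by
  rw [greenU, greenU, min_comm, max_comm]

theorem greenU_sub_greenD {n : ℕ} {u κ : ℂ} (hκ : κ ≠ 0) (hu : u / n + κ ≠ 0) (x y : ℝ) :
    greenU n u κ x y - greenD κ x y = exp (-κ * ↑(x + y)) / (u / n + κ) := by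
  have hexp : exp (-κ * ↑(x + y)) = exp (-κ * ↑(max x y)) * exp (-(κ * ↑(min x y))) := by
    rw [← exp_add, ← min_add_max x y]; push_cast; ring_nf
  have hcosh := cosh_sub_sinh (κ * ↑(min x y))
  rw [greenU, greenD, hexp, ← hcosh]
  field_simp
  ring

theorem norm_greenD_le (κ : ℂ) {x y : ℝ} (hxy : 0 ≤ min x y) (hκ : ‖κ‖ * min x y ≤ 1) :
    ‖greenD κ x y‖ ≤ 2 * min x y * Real.exp (-κ.re * max x y) := by
  rcases eq_or_ne κ 0 with rfl | hκ0
  · simpa [greenD] using hxy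
  have hz : ‖κ * ↑(min x y)‖ = ‖κ‖ * min x y := by
    rw [norm_mul, Complex.norm_real, Real.norm_of_nonneg hxy]
  have hsinh := Complex.norm_sinh_le_two_mul (hz ▸ hκ)
  rw [greenD, norm_mul, norm_mul, Complex.norm_exp_neg_mul_ofReal, norm_inv, hz] at *
  calc ‖κ‖⁻¹ * ‖sinh (κ * ↑(min x y))‖ * Real.exp (-κ.re * max x y)
      ≤ ‖κ‖⁻¹ * (2 * (‖κ‖ * min x y)) * Real.exp (-κ.re * max x y) := by gcongr
    _ = 2 * min x y * Real.exp (-κ.re * max x y) := by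
      field_simp [norm_ne_zero_iff.mpr hκ0]

theorem le_norm_inv_vCoupling {a : ℂ} {d : ℝ} (hd : 0 < d)
    (ha : d * ‖I * (a - 1) / (a + 1)‖ ≤ 1 / 2) : 2 * d / 3 ≤ ‖(vCoupling a d)⁻¹‖ := by
  set w := I * (a - 1) / (a + 1)
  have hv : vCoupling a d = -(1 + d * w) / d := by
    have hd0 : (d : ℂ) ≠ 0 := by exact_mod_cast hd.ne'
    rw [vCoupling]; field_simp; ring
  have hdw : ‖(d : ℂ) * w‖ = d * ‖w‖ := by rw [norm_mul, Complex.norm_real, Real.norm_of_nonneg hd.le]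
  have hup : ‖1 + d * w‖ ≤ 3 / 2 := (norm_add_le _ _).trans (by rw [norm_one, hdw]; linarith)
  have hlow : 1 / 2 ≤ ‖1 + d * w‖ := by
    have := norm_sub_norm_le (1 : ℂ) (-(d * w))
    rw [sub_neg_eq_add, norm_one, norm_neg, hdw] at this
    linarith
  rw [hv, inv_div, norm_div, norm_neg, Complex.norm_real, Real.norm_of_nonneg hd.le,
    le_div_iff₀ (by linarith)]
  nlinarith

section SmallDistance

variable {n : ℕ} {u κ : ℂ} {d : ℝ}

theorem seven_div_eight_le_norm_mul_sub_one (hd : 0 < d) (hκd : ‖κ‖ * d ≤ 1 / 8) :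
    7 / 8 ≤ ‖κ * d - 1‖ := by
  have := norm_sub_norm_le (1 : ℂ) (κ * d)
  rw [norm_one, norm_mul, Complex.norm_real, Real.norm_of_nonneg hd.le, norm_sub_rev] at this
  linarith

theorem inv_two_mul_le_norm_div_add (hd : 0 < d) (hu : u / n = -(d : ℂ)⁻¹)
    (hκd : ‖κ‖ * d ≤ 1 / 8) : (2 * d)⁻¹ ≤ ‖u / n + κ‖ := by
  have hd0 : (d : ℂ) ≠ 0 := by exact_mod_cast hd.ne'
  have h : u / n + κ = (κ * d - 1) / d := by rw [hu]; field_simp; ring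
  have h2 : (2 * d)⁻¹ * d = 1 / 2 := by field_simp
  rw [h, norm_div, Complex.norm_real, Real.norm_of_nonneg hd.le, le_div_iff₀ hd, h2]
  linarith [seven_div_eight_le_norm_mul_sub_one hd hκd]

theorem norm_greenU_sub_greenD_le (hd : 0 < d) (hu : u / n = -(d : ℂ)⁻¹)
    (hκd : ‖κ‖ * d ≤ 1 / 8) (hκ : 0 < κ.re) (x y : ℝ) :
    ‖greenU n u κ x y - greenD κ x y‖ ≤ 2 * d * Real.exp (-κ.re * (x + y)) := by
  have hlow := inv_two_mul_le_norm_div_add hd hu hκd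
  have hκ0 : κ ≠ 0 := fun h => by simp [h] at hκ
  have hpos : 0 < ‖u / n + κ‖ := lt_of_lt_of_le (by positivity) hlow
  rw [greenU_sub_greenD hκ0 (norm_pos_iff.mp hpos), norm_div, Complex.norm_exp_neg_mul_ofReal,
    div_le_iff₀ hpos]
  calc Real.exp (-κ.re * (x + y)) = 2 * d * Real.exp (-κ.re * (x + y)) * (2 * d)⁻¹ := by
        field_simp
    _ ≤ 2 * d * Real.exp (-κ.re * (x + y)) * ‖u / n + κ‖ := by gcongr

theorem norm_greenU_left_le (hd : 0 < d) (hu : u / n = -(d : ℂ)⁻¹) (hκd : ‖κ‖ * d ≤ 1 / 8)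
    (hκ : 0 < κ.re) {x : ℝ} (hx : 0 ≤ x) :
    ‖greenU n u κ x d‖ ≤ 4 * d * Real.exp (-κ.re * x) := by
  have hmin : min x d ≤ d := min_le_right x d
  have hD := norm_greenD_le κ (le_min hx hd.le)
    ((mul_le_mul_of_nonneg_left hmin (norm_nonneg κ)).trans (by linarith))
  have hdiff := norm_greenU_sub_greenD_le hd hu hκd hκ x d
  have e₁ : Real.exp (-κ.re * max x d) ≤ Real.exp (-κ.re * x) := by
    exact Real.exp_le_exp.2 (by nlinarith [le_max_left x d])
  have e₂ : Real.exp (-κ.re * (x + d)) ≤ Real.exp (-κ.re * x) := by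
    exact Real.exp_le_exp.2 (by nlinarith)
  calc ‖greenU n u κ x d‖ ≤ ‖greenD κ x d‖ + ‖greenU n u κ x d - greenD κ x d‖ :=
        norm_le_insert' _ _
    _ ≤ 2 * d * Real.exp (-κ.re * x) + 2 * d * Real.exp (-κ.re * x) := by
        gcongr
        · exact hD.trans (by gcongr)
        · exact hdiff.trans (by gcongr)
    _ = 4 * d * Real.exp (-κ.re * x) := by ring

theorem norm_greenU_self_le (hd : 0 < d) (hu : u / n = -(d : ℂ)⁻¹) (hκd : ‖κ‖ * d ≤ 1 / 8)
    (hκ : 0 < κ.re) : ‖greenU n u κ d d‖ ≤ d / 3 := by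
  have hd0 : (d : ℂ) ≠ 0 := by exact_mod_cast hd.ne'
  have hκ0 : κ ≠ 0 := fun h => by simp [h] at hκ
  have hden := seven_div_eight_le_norm_mul_sub_one hd hκd
  have hz1 : κ * d - 1 ≠ 0 := norm_pos_iff.mp (by linarith)
  have hz : ‖κ * d‖ = ‖κ‖ * d := by
    rw [norm_mul, Complex.norm_real, Real.norm_of_nonneg hd.le]
  have hnum := Complex.norm_mul_cosh_sub_sinh_le (z := κ * d) (by rw [hz]; linarith)
  have hexp : ‖exp (-κ * d)‖ ≤ 1 := by
    rw [Complex.norm_exp_neg_mul_ofReal, Real.exp_le_one_iff]; nlinarith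
  have h : greenU n u κ d d
      = exp (-κ * d) * (κ * d * cosh (κ * d) - sinh (κ * d)) / (κ * (κ * d - 1)) := by
    rw [greenU, hu, min_self, max_self,
      show -(d : ℂ)⁻¹ + κ = (κ * d - 1) / d by field_simp; ring]
    field_simp
    ring
  rw [h, norm_div, norm_mul, norm_mul, hz] at *
  rw [div_le_iff₀ (mul_pos (norm_pos_iff.mpr hκ0) (by linarith))]
  calc ‖exp (-κ * d)‖ * ‖κ * d * cosh (κ * d) - sinh (κ * d)‖
      ≤ 1 * (2 * (‖κ‖ * d) ^ 2) := by gcongr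
    _ ≤ d / 3 * (‖κ‖ * (7 / 8)) := by nlinarith [mul_nonneg (norm_nonneg κ) hd.le]
    _ ≤ d / 3 * (‖κ‖ * ‖κ * d - 1‖) := by gcongr

theorem le_norm_krein_denom (hd : 0 < d) (hu : u / n = -(d : ℂ)⁻¹) (hκd : ‖κ‖ * d ≤ 1 / 8)
    (hκ : 0 < κ.re) {v : ℂ} (hv : 2 * d / 3 ≤ ‖v⁻¹‖) :
    d / 3 ≤ ‖-v⁻¹ - greenU n u κ d d‖ := by
  have := norm_sub_norm_le (-v⁻¹) (greenU n u κ d d)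
  rw [norm_neg] at this
  linarith [norm_greenU_self_le hd hu hκd hκ]

theorem norm_greenUv_sub_greenD_le (hd : 0 < d) (hu : u / n = -(d : ℂ)⁻¹)
    (hκd : ‖κ‖ * d ≤ 1 / 8) (hκ : 0 < κ.re) {v : ℂ} (hv : 2 * d / 3 ≤ ‖v⁻¹‖)
    {x y : ℝ} (hx : 0 ≤ x) (hy : 0 ≤ y) :
    ‖greenUv n u v κ d x y - greenD κ x y‖ ≤ 50 * d * Real.exp (-κ.re * (x + y)) := by
  have hden := le_norm_krein_denom hd hu hκd hκ hv
  have hGx := norm_greenU_left_le hd hu hκd hκ hx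
  have hGy := norm_greenU_left_le hd hu hκd hκ hy
  rw [greenU_comm] at hGy
  have hexp : Real.exp (-κ.re * (x + y)) = Real.exp (-κ.re * x) * Real.exp (-κ.re * y) := by
    rw [← Real.exp_add]; ring_nf
  have hkrein : ‖greenU n u κ x d * greenU n u κ d y / (-v⁻¹ - greenU n u κ d d)‖
      ≤ 48 * d * Real.exp (-κ.re * (x + y)) := by
    rw [norm_div, norm_mul, div_le_iff₀ (by linarith), hexp]
    calc ‖greenU n u κ x d‖ * ‖greenU n u κ d y‖
        ≤ (4 * d * Real.exp (-κ.re * x)) * (4 * d * Real.exp (-κ.re * y)) := by gcongr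
      _ = 48 * d * (Real.exp (-κ.re * x) * Real.exp (-κ.re * y)) * (d / 3) := by ring
      _ ≤ _ := by gcongr
  calc ‖greenUv n u v κ d x y - greenD κ x y‖
      = ‖(greenU n u κ x y - greenD κ x y)
          + greenU n u κ x d * greenU n u κ d y / (-v⁻¹ - greenU n u κ d d)‖ := by
        rw [greenUv]; ring_nf
    _ ≤ 2 * d * Real.exp (-κ.re * (x + y)) + 48 * d * Real.exp (-κ.re * (x + y)) :=
        (norm_add_le _ _).trans (add_le_add (norm_greenU_sub_greenD_le hd hu hκd hκ x y) hkrein)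
    _ = 50 * d * Real.exp (-κ.re * (x + y)) := by ring

end SmallDistance

theorem integral_Ioi_integral_Ioi_norm_sq_le {F : ℝ → ℝ → ℂ} {C r : ℝ} (hr : 0 < r)
    (hF : ∀ x > 0, ∀ y > 0, ‖F x y‖ ≤ C * Real.exp (-r * (x + y))) :
    ∫ x in Ioi (0 : ℝ), ∫ y in Ioi (0 : ℝ), ‖F x y‖ ^ 2 ≤ (C / (2 * r)) ^ 2 := by
  set e : ℝ → ℝ := fun t => Real.exp (-(2 * r) * t)
  have he : IntegrableOn e (Ioi 0) := integrableOn_exp_mul_Ioi (by linarith) 0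
  have hJ : ∫ t in Ioi (0 : ℝ), e t = (2 * r)⁻¹ := by
    simp only [e]
    rw [integral_exp_mul_Ioi (by linarith)]
    simp
  have hsq : ∀ x > 0, ∀ y > 0, ‖F x y‖ ^ 2 ≤ C ^ 2 * e x * e y := fun x hx y hy => by
    refine (pow_le_pow_left₀ (norm_nonneg _) (hF x hx y hy) 2).trans_eq ?_
    simp only [e, mul_pow, ← Real.exp_nat_mul, ← Real.exp_add, mul_assoc]
    ring_nf
  have hinner : ∀ x > 0, ∫ y in Ioi (0 : ℝ), ‖F x y‖ ^ 2 ≤ C ^ 2 * e x * (2 * r)⁻¹ := by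
    intro x hx
    rw [← hJ, ← integral_const_mul]
    refine integral_mono_of_nonneg (ae_of_all _ fun y => by positivity) (he.const_mul _) ?_
    exact (ae_restrict_iff' measurableSet_Ioi).2 (ae_of_all _ (hsq x hx))
  calc ∫ x in Ioi (0 : ℝ), ∫ y in Ioi (0 : ℝ), ‖F x y‖ ^ 2
      ≤ ∫ x in Ioi (0 : ℝ), C ^ 2 * (2 * r)⁻¹ * e x := by
        refine integral_mono_of_nonneg
          (ae_of_all _ fun x => integral_nonneg fun y => by positivity) (he.const_mul _) ?_
        refine (ae_restrict_iff' measurableSet_Ioi).2 (ae_of_all _ fun x hx => ?_)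
        exact (hinner x hx).trans_eq (by ring)
    _ = (C / (2 * r)) ^ 2 := by
        rw [integral_const_mul, hJ]
        ring

theorem stmt_19_general (n : ℕ) (hn : 2 ≤ n) (a : ℂ)
    (κ : ℂ) (hκ : 0 < κ.re)
    (u : ℝ → ℂ) (hu : ∀ d : ℝ, 0 < d → u d = -(n : ℂ) / (d : ℂ)) :
    (∃ d₀ > (0 : ℝ), ∀ d : ℝ, 0 < d → d < d₀ →
      u d / n + κ ≠ 0
        ∧ -(vCoupling a d)⁻¹ - greenU n (u d) κ d d ≠ 0)
    ∧ Tendsto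
        (fun d : ℝ => ∫ x in Ioi (0 : ℝ), ∫ y in Ioi (0 : ℝ),
          ‖greenUv n (u d) (vCoupling a d) κ d x y
              - greenD κ x y‖ ^ 2)
        (nhdsWithin 0 (Ioi 0)) (nhds 0) := by
  have hn0 : (n : ℂ) ≠ 0 := by exact_mod_cast (by omega : n ≠ 0)
  have hud : ∀ d : ℝ, 0 < d → u d / n = -(d : ℂ)⁻¹ := fun d hd => by
    rw [hu d hd]; field_simp
  have hsmall : ∀ᶠ d in 𝓝[>] (0 : ℝ),
      0 < d ∧ ‖κ‖ * d ≤ 1 / 8 ∧ d * ‖I * (a - 1) / (a + 1)‖ ≤ 1 / 2 := by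
    refine eventually_mem_nhdsWithin.and (Eventually.and ?_ ?_) <;>
      refine (Continuous.tendsto' (by fun_prop) 0 0 (by simp)).mono_left nhdsWithin_le_nhds
        |>.eventually (ge_mem_nhds (by norm_num))
  refine ⟨?_, ?_⟩
  · obtain ⟨d₀, hd₀, h⟩ := (nhdsGT_basis 0).eventually_iff.mp hsmall
    refine ⟨d₀, hd₀, fun d hd hdd => ?_⟩
    obtain ⟨hd, hκd, ha⟩ := h ⟨hd, hdd⟩
    refine ⟨norm_pos_iff.mp ?_, norm_pos_iff.mp ?_⟩
    · exact lt_of_lt_of_le (by positivity) (inv_two_mul_le_norm_div_add hd (hud d hd) hκd)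
    · exact lt_of_lt_of_le (by positivity)
        (le_norm_krein_denom hd (hud d hd) hκd hκ (le_norm_inv_vCoupling hd ha))
  · have hlim : Tendsto (fun d : ℝ => (50 * d / (2 * κ.re)) ^ 2) (𝓝[>] 0) (𝓝 0) :=
      (Continuous.tendsto' (by fun_prop) 0 0 (by simp)).mono_left nhdsWithin_le_nhds
    refine squeeze_zero' (Eventually.of_forall fun d => integral_nonneg fun x =>
      integral_nonneg fun y => by positivity) (hsmall.mono fun d ⟨hd, hκd, ha⟩ => ?_) hlim
    exact integral_Ioi_integral_Ioi_norm_sq_le hκ fun x hx y hy =>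
      norm_greenUv_sub_greenD_le hd (hud d hd) hκd hκ (le_norm_inv_vCoupling hd ha) hx.le hy.le

theorem stmt_19 (n : ℕ) (hn : 2 ≤ n) (a b : ℂ)
    (ha : ‖a‖ = 1) (ha' : a ≠ -1) (hb : b ≠ 0)
    (hdp : a + n * b = -1)
    (κ : ℂ) (hκ : 0 < κ.re)
    (u : ℝ → ℂ) (hu : ∀ d : ℝ, 0 < d → u d = -(n : ℂ) / (d : ℂ)) :
    (∃ d₀ > (0 : ℝ), ∀ d : ℝ, 0 < d → d < d₀ →
      u d / n + κ ≠ 0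
        ∧ -(vCoupling a d)⁻¹ - greenU n (u d) κ d d ≠ 0)
    ∧ Tendsto
        (fun d : ℝ => ∫ x in Ioi (0 : ℝ), ∫ y in Ioi (0 : ℝ),
          ‖greenUv n (u d) (vCoupling a d) κ d x y
              - greenD κ x y‖ ^ 2)
        (nhdsWithin 0 (Ioi 0)) (nhds 0) :=
  stmt_19_general n hn a κ hκ u hu
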